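/- Let (F*, σ*) be a feasible LBkSupO-solution with maximum radius R. Let N := |𝓕| + 1 and 𝓓' := (𝓓 × {1,…,N}) ∪ 𝓕. Then there exists σ̂ : 𝓓' → F* ∪ {out} such that |σ̂⁻¹(i)| ≥ N·L_i for every i ∈ F*, |σ̂⁻¹(out)| ≤ N·m + N − 1, every element of 𝓕 ⊆ 𝓓' is mapped to out, and c(j, i) ≤ R whenever σ̂((j, p)) = i ∈ F* for a copy (j, p) ∈ 𝓓 × {1,…,N}. In particular, the derived lower-bounded k-center instance on client set 𝓓' (with lower bounds N·L_i on facilities i ∈ 𝓕 and outlier bound N·m + N − 1) has a feasible solution of maximum radius at most R. -/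

import Mathlib

/-!
Make `N` copies of every client, each copy served exactly as `σ*` serves the original, and
send every facility element of `𝓓'` to the outliers. Each served copy `(j, p)` is then at
distance `c(σ*(j), j) ≤ R` from its centre, every `i ∈ F*` receives `N` times its old load, and
the outliers are the `N` copies of the at most `m` old outliers plus the `|𝓕| = N - 1` facility
elements.
-/

open Finset

namespace Finset

variable {α β : Type*}

lemma image_inl_union_image_inr [DecidableEq (α ⊕ β)] (s : Finset α) (t : Finset β) :
    s.image Sum.inl ∪ t.image Sum.inr = s.disjSum t := by
  ext (a | b) <;> simp

end Finset

section CopyAssignment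

variable {α β γ ι : Type*}

def copyAssignment (σ : α → Option β) : (α × ι) ⊕ γ → Option β :=
  Sum.elim (fun jp => σ jp.1) fun _ => none

lemma filter_copyAssignment_eq [DecidableEq β] (σ : α → Option β) (s : Finset α)
    (I : Finset ι) (t : Finset γ) (v : Option β) :
    ((s ×ˢ I).disjSum t).filter (copyAssignment σ · = v) =
      (s.filter (σ · = v) ×ˢ I).disjSum (if v = none then t else ∅) := by
  ext (⟨a, p⟩ | c) <;> rw [mem_filter]
  · simp [copyAssignment, and_right_comm]
  · split_ifs <;> simp [copyAssignment, eq_comm, *]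

lemma card_filter_copyAssignment [DecidableEq β] (σ : α → Option β) (s : Finset α)
    (I : Finset ι) (t : Finset γ) (v : Option β) :
    #(((s ×ˢ I).disjSum t).filter (copyAssignment σ · = v)) =
      #I * #(s.filter (σ · = v)) + if v = none then #t else 0 := by
  rw [filter_copyAssignment_eq, card_disjSum, card_product, Nat.mul_comm, apply_ite card,
    card_empty]

end CopyAssignment

theorem stmt_14 {X : Type*} [MetricSpace X] [DecidableEq X]
    (𝓕 𝓓 : Finset X) (L : X → ℕ) (m : ℕ) (R : ℝ)
    (Fstar : Finset X) (σstar : X → Option X)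
    (hassign : ∀ j ∈ 𝓓, ∀ i, σstar j = some i → i ∈ Fstar ∧ dist i j ≤ R)
    (hlb : ∀ i ∈ Fstar, L i ≤ (𝓓.filter fun j => σstar j = some i).card)
    (hout : (𝓓.filter fun j => σstar j = none).card ≤ m)
    (N : ℕ) (hN : N = 𝓕.card + 1)
    (D' : Finset ((X × ℕ) ⊕ X))
    (hD' : D' = ((𝓓 ×ˢ Finset.Icc 1 N).image Sum.inl) ∪ (𝓕.image Sum.inr)) :
    ∃ σhat : (X × ℕ) ⊕ X → Option X,
      (∀ d ∈ D', ∀ i, σhat d = some i → i ∈ Fstar) ∧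
      (∀ i ∈ Fstar, N * L i ≤ (D'.filter fun d => σhat d = some i).card) ∧
      ((D'.filter fun d => σhat d = none).card ≤ N * m + N - 1) ∧
      (∀ i' ∈ 𝓕, σhat (Sum.inr i') = none) ∧
      (∀ j p i, Sum.inl (j, p) ∈ D' → σhat (Sum.inl (j, p)) = some i →
        dist j i ≤ R) := by
  subst hD'
  rw [image_inl_union_image_inr]
  have served : ∀ j p i, Sum.inl (j, p) ∈ (𝓓 ×ˢ Icc 1 N).disjSum 𝓕 → σstar j = some i →
      i ∈ Fstar ∧ dist i j ≤ R :=
    fun j p i hd => hassign j (mem_product.1 (inl_mem_disjSum.1 hd)).1 i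
  refine ⟨copyAssignment σstar, ?_, fun i hi => ?_, ?_, fun _ _ => rfl,
    fun j p i hd hi => dist_comm j i ▸ (served j p i hd hi).2⟩
  · rintro (⟨j, p⟩ | x) hd i hi
    · exact (served j p i hd hi).1
    · cases hi
  · rw [card_filter_copyAssignment, Nat.card_Icc, if_neg (Option.some_ne_none i), add_zero,
      Nat.add_sub_cancel]
    exact Nat.mul_le_mul_left N (hlb i hi)
  · rw [card_filter_copyAssignment, Nat.card_Icc, if_pos rfl, Nat.add_sub_cancel]
    have := Nat.mul_le_mul_left N hout
    omega
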